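/- Let ε₁ = e₁, ε₂ = e₂, ε₃ = −e₁ − e₂ and γ = e₃, where e₁, e₂, e₃ is the standard basis of ℝ³, and let Δ ⊂ ℝ³ be the root system of G(3), namely Δ := {ε_i − ε_j : 1 ≤ i ≠ j ≤ 3} ∪ {±ε_i : 1 ≤ i ≤ 3} ∪ {±γ} ∪ {±γ/2} ∪ {±ε_i ± γ/2 : 1 ≤ i ≤ 3}. Then there exists no cominuscule parabolic set of roots of Δ. -/

import Mathlib

open Pointwise

/-- A proper subset `P` of a symmetric root set `Δ` is a parabolic set of roots if
`Δ = P ∪ (-P)` and `P` is closed under sums lying in `Δ`. -/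
def IsParabolic {V : Type*} [AddCommGroup V] (Δ P : Set V) : Prop :=
  P ⊂ Δ ∧ Δ = P ∪ (-P) ∧ ∀ α ∈ P, ∀ β ∈ P, α + β ∈ Δ → α + β ∈ P

/-- A parabolic set of roots is cominuscule if the sum of any two elements of its
nilradical `N⁺ = P \ (-P)` is not a root. -/
def IsCominuscule {V : Type*} [AddCommGroup V] (Δ P : Set V) : Prop :=
  IsParabolic Δ P ∧ ∀ α ∈ P \ (-P), ∀ β ∈ P \ (-P), α + β ∉ Δ

namespace G3

/-- `ε₁ = e₁`, `ε₂ = e₂`, `ε₃ = -e₁ - e₂` in `ℝ³`. -/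
noncomputable def ε (i : Fin 3) : Fin 3 → ℝ :=
  if i = 0 then Pi.single 0 1
  else if i = 1 then Pi.single 1 1
  else -Pi.single 0 1 - Pi.single 1 1

/-- `γ = e₃`, the third standard basis vector of `ℝ³`. -/
noncomputable def γ : Fin 3 → ℝ := Pi.single 2 1

/-- The root system of `G(3)`. -/
noncomputable def Δroot : Set (Fin 3 → ℝ) :=
  {v | ∃ i j : Fin 3, i ≠ j ∧ v = ε i - ε j} ∪
  {v | ∃ i : Fin 3, v = ε i ∨ v = -ε i} ∪
  {v | v = γ ∨ v = -γ} ∪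
  {v | v = (2⁻¹ : ℝ) • γ ∨ v = -((2⁻¹ : ℝ) • γ)} ∪
  {v | ∃ i : Fin 3, v = ε i + (2⁻¹ : ℝ) • γ ∨ v = ε i - (2⁻¹ : ℝ) • γ ∨
      v = -ε i + (2⁻¹ : ℝ) • γ ∨ v = -ε i - (2⁻¹ : ℝ) • γ}

end G3

/-!
In a cominuscule parabolic set `P`, a root `α ∈ N⁺` stays in `N⁺` when a root of `L` is added
(as long as the sum is a root), and there is no root `β` with `α + β`, `α - β`, `2α + β` all roots.
For `G(3)`: `γ/2 ∈ L` because `γ = 2 · (γ/2)` is a root; the relation `ε₁ + ε₂ + ε₃ = 0` supplies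
such a `β` for `α = ±εᵢ`; and every other root is moved onto `±εᵢ` or `±γ/2` by adding `±γ/2`
or `εⱼ ∈ L`. Hence `N⁺ = ∅`, i.e. `P = Δ`, which a parabolic set is not.
-/

def levi {V : Type*} [AddCommGroup V] (P : Set V) : Set V := P ∩ -P

def posNilradical {V : Type*} [AddCommGroup V] (P : Set V) : Set V := P \ -P

section Parabolic

variable {V : Type*} [AddCommGroup V] {Δ P : Set V} {α β δ : V}

lemma neg_mem_levi (hα : α ∈ levi P) : -α ∈ levi P :=
  ⟨hα.2, by simpa using hα.1⟩

lemma notMem_posNilradical_of_mem_levi (hα : α ∈ levi P) : α ∉ posNilradical P :=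
  fun hN ↦ hN.2 hα.2

namespace IsParabolic

lemma neg_mem (hP : IsParabolic Δ P) (hα : α ∈ Δ) : -α ∈ Δ := by
  rw [hP.2.1] at hα ⊢
  exact hα.symm.imp id (by simp)

lemma mem_posNilradical_or_mem_levi_or_neg_mem_posNilradical (hP : IsParabolic Δ P)
    (hα : α ∈ Δ) : α ∈ posNilradical P ∨ α ∈ levi P ∨ -α ∈ posNilradical P := by
  rw [hP.2.1] at hα
  by_cases hα' : α ∈ P <;> by_cases hnα : -α ∈ P
  · exact Or.inr (Or.inl ⟨hα', hnα⟩)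
  · exact Or.inl ⟨hα', hnα⟩
  · exact Or.inr (Or.inr ⟨hnα, by simpa using hα'⟩)
  · exact (hα.elim hα' hnα).elim

lemma exists_mem_posNilradical (hP : IsParabolic Δ P) : ∃ α ∈ Δ, α ∈ posNilradical P := by
  obtain ⟨α, hαΔ, hαP⟩ := Set.exists_of_ssubset hP.1
  have hαP' : α ∈ P ∪ -P := hP.2.1 ▸ hαΔ
  exact ⟨-α, hP.neg_mem hαΔ, hαP'.resolve_left hαP, by simpa using hαP⟩

lemma add_mem_posNilradical (hP : IsParabolic Δ P) (hα : α ∈ posNilradical P)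
    (hβ : β ∈ levi P) (hαβ : α + β ∈ Δ) : α + β ∈ posNilradical P := by
  refine ⟨hP.2.2 α hα.1 β hβ.1 hαβ, fun hneg ↦ hα.2 ?_⟩
  have h : -(α + β) + β = -α := by abel
  simpa [h] using hP.2.2 _ hneg β hβ.1 (h ▸ hP.neg_mem (hP.1.subset hα.1))

lemma notMem_posNilradical_of_add_eq (hP : IsParabolic Δ P) (hβ : β ∈ levi P)
    (hαβ : α + β = δ) (hδ : δ ∈ Δ) (hδN : δ ∉ posNilradical P) : α ∉ posNilradical P :=
  fun hα ↦ hδN (hαβ ▸ hP.add_mem_posNilradical hα hβ (hαβ ▸ hδ))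

end IsParabolic

namespace IsCominuscule

lemma isParabolic (hP : IsCominuscule Δ P) : IsParabolic Δ P := hP.1

lemma add_notMem (hP : IsCominuscule Δ P) (hα : α ∈ posNilradical P)
    (hβ : β ∈ posNilradical P) : α + β ∉ Δ :=
  hP.2 α hα β hβ

lemma mem_levi_of_add_self_mem (hP : IsCominuscule Δ P) (hα : α ∈ Δ) (h2α : α + α ∈ Δ) :
    α ∈ levi P := by
  rcases hP.isParabolic.mem_posNilradical_or_mem_levi_or_neg_mem_posNilradical hα
    with hN | hL | hN
  · exact (hP.add_notMem hN hN h2α).elim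
  · exact hL
  · exact (hP.add_notMem hN hN (by simpa [neg_add] using hP.isParabolic.neg_mem h2α)).elim

/-- `β ∈ N⁺` is excluded by `α + β`, `-β ∈ N⁺` by `α - β`, and `β ∈ L` would put `α + β`
into `N⁺`, which `2α + β` excludes. -/
lemma false_of_add_sub_mem (hP : IsCominuscule Δ P) (hα : α ∈ posNilradical P) (hβ : β ∈ Δ)
    (hadd : α + β ∈ Δ) (hsub : α - β ∈ Δ) (hadd₂ : α + (α + β) ∈ Δ) : False := by
  rcases hP.isParabolic.mem_posNilradical_or_mem_levi_or_neg_mem_posNilradical hβ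
    with hN | hL | hN
  · exact hP.add_notMem hα hN hadd
  · exact hP.add_notMem hα (hP.isParabolic.add_mem_posNilradical hα hL hadd) hadd₂
  · exact hP.add_notMem hα hN (by rwa [← sub_eq_add_neg])

end IsCominuscule

end Parabolic

namespace G3

lemma ε_sub_ε_mem {i j : Fin 3} (h : i ≠ j) : ε i - ε j ∈ Δroot :=
  Or.inl (Or.inl (Or.inl (Or.inl ⟨i, j, h, rfl⟩)))

lemma ε_mem (i : Fin 3) : ε i ∈ Δroot :=
  Or.inl (Or.inl (Or.inl (Or.inr ⟨i, Or.inl rfl⟩)))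

lemma neg_ε_mem (i : Fin 3) : -ε i ∈ Δroot :=
  Or.inl (Or.inl (Or.inl (Or.inr ⟨i, Or.inr rfl⟩)))

lemma γ_mem : γ ∈ Δroot := Or.inl (Or.inl (Or.inr (Or.inl rfl)))

lemma half_γ_mem : (2⁻¹ : ℝ) • γ ∈ Δroot := Or.inl (Or.inr (Or.inl rfl))

lemma exists_ε_add_ε_eq_neg_ε (m : Fin 3) :
    ∃ j k : Fin 3, m ≠ j ∧ m ≠ k ∧ ε m + ε j = -ε k := by
  fin_cases m
  · exact ⟨1, 2, by decide, by decide, by ext x; fin_cases x <;> simp [ε]⟩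
  · exact ⟨2, 0, by decide, by decide, by ext x; fin_cases x <;> simp [ε]⟩
  · exact ⟨0, 1, by decide, by decide, by ext x; fin_cases x <;> simp [ε]⟩

variable {P : Set (Fin 3 → ℝ)}

lemma half_γ_mem_levi (hP : IsCominuscule Δroot P) : (2⁻¹ : ℝ) • γ ∈ levi P := by
  refine hP.mem_levi_of_add_self_mem half_γ_mem ?_
  rw [← two_smul ℝ, smul_inv_smul₀ two_ne_zero]
  exact γ_mem

lemma ε_notMem_posNilradical (hP : IsCominuscule Δroot P) (i : Fin 3) :
    ε i ∉ posNilradical P ∧ -ε i ∉ posNilradical P := by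
  obtain ⟨j, k, hij, hik, hsum⟩ := exists_ε_add_ε_eq_neg_ε i
  constructor <;> intro hN
  · refine hP.false_of_add_sub_mem hN (ε_mem j) ?_ (ε_sub_ε_mem hij) ?_
    · rw [hsum]; exact neg_ε_mem k
    · rw [hsum, ← sub_eq_add_neg]; exact ε_sub_ε_mem hik
  · have hsum' : -ε i + -ε j = ε k := by rw [← neg_add, hsum, neg_neg]
    refine hP.false_of_add_sub_mem hN (neg_ε_mem j) ?_ ?_ ?_
    · rw [hsum']; exact ε_mem k
    · rw [neg_sub_neg]; exact ε_sub_ε_mem hij.symm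
    · rw [hsum', neg_add_eq_sub]; exact ε_sub_ε_mem hik.symm

lemma notMem_posNilradical (hP : IsCominuscule Δroot P) {α : Fin 3 → ℝ} (hα : α ∈ Δroot) :
    α ∉ posNilradical P := by
  have hL := half_γ_mem_levi hP
  have hL' := neg_mem_levi hL
  have hε := ε_notMem_posNilradical hP
  have hPar := hP.isParabolic
  rcases hα with ((((⟨i, j, hij, rfl⟩ | ⟨i, rfl | rfl⟩) | rfl | rfl) | rfl | rfl) |
    ⟨i, rfl | rfl | rfl | rfl⟩)
  · rcases hPar.mem_posNilradical_or_mem_levi_or_neg_mem_posNilradical (ε_mem j)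
      with hj | hj | hj
    · exact fun _ ↦ (hε j).1 hj
    · exact hPar.notMem_posNilradical_of_add_eq hj (sub_add_cancel _ _) (ε_mem i) (hε i).1
    · exact fun _ ↦ (hε j).2 hj
  · exact (hε i).1
  · exact (hε i).2
  · exact hPar.notMem_posNilradical_of_add_eq
      hL' (by module) half_γ_mem (notMem_posNilradical_of_mem_levi hL)
  · exact hPar.notMem_posNilradical_of_add_eq hL (by module) (hPar.neg_mem half_γ_mem)
      (notMem_posNilradical_of_mem_levi hL')
  · exact notMem_posNilradical_of_mem_levi hL
  · exact notMem_posNilradical_of_mem_levi hL'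
  · exact hPar.notMem_posNilradical_of_add_eq hL' (add_neg_cancel_right _ _) (ε_mem i) (hε i).1
  · exact hPar.notMem_posNilradical_of_add_eq hL (sub_add_cancel _ _) (ε_mem i) (hε i).1
  · exact hPar.notMem_posNilradical_of_add_eq hL' (add_neg_cancel_right _ _) (neg_ε_mem i) (hε i).2
  · exact hPar.notMem_posNilradical_of_add_eq hL (sub_add_cancel _ _) (neg_ε_mem i) (hε i).2

end G3

theorem stmt_11 : ¬ ∃ P : Set (Fin 3 → ℝ), IsCominuscule G3.Δroot P := by
  rintro ⟨P, hP⟩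
  obtain ⟨α, hαΔ, hαN⟩ := hP.isParabolic.exists_mem_posNilradical
  exact G3.notMem_posNilradical hP hαΔ hαN
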